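/- Let (Z,η) be a Lebesgue probability space and let Q be a measure-preserving Markov operator on L¹(Z,η) such that for some m ≥ 1 every ψ ∈ L²(Z,η) with (Q*)^m Q^m ψ = ψ is a.e. constant. Then Q itself is mixing: for all φ, ψ ∈ L²(Z,η), ∫_Z (Q^n φ)·ψ̄ dη → (∫_Z φ dη)·(∫_Z ψ̄ dη) as n → ∞. -/

import Mathlib

open MeasureTheory Filter ENNReal Topology

noncomputable section

/-- The constant function `1` as an element of `L¹(Z,η)`. -/
def oneL1 {Z : Type*} [MeasurableSpace Z] (η : Measure Z) [IsFiniteMeasure η] : Lp ℝ 1 η :=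
  MemLp.toLp (fun _ => (1 : ℝ)) (memLp_const 1)

/-- A measure-preserving Markov operator on `L¹(Z,η)`: positive, fixes the constants,
and preserves the integral. -/
def IsMarkovOp {Z : Type*} [MeasurableSpace Z] (η : Measure Z) [IsFiniteMeasure η]
    (Q : Lp ℝ 1 η →ₗ[ℝ] Lp ℝ 1 η) : Prop :=
  (∀ φ : Lp ℝ 1 η, 0 ≤ φ → 0 ≤ Q φ) ∧
  Q (oneL1 η) = oneL1 η ∧
  ∀ φ : Lp ℝ 1 η, ∫ z, (Q φ : Z → ℝ) z ∂η = ∫ z, (φ : Z → ℝ) z ∂η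

/-- `Qs` agrees on `L²(Z,η)` with the Hilbert-space adjoint of the restriction of `Q` to `L²`. -/
def MarkovAdjoint {Z : Type*} [MeasurableSpace Z] (η : Measure Z) [IsFiniteMeasure η]
    (Q Qs : Lp ℝ 1 η →ₗ[ℝ] Lp ℝ 1 η) : Prop :=
  ∀ φ ψ : Lp ℝ 1 η, MemLp (φ : Z → ℝ) 2 η → MemLp (ψ : Z → ℝ) 2 η →
    ∫ z, (Q φ : Z → ℝ) z * (ψ : Z → ℝ) z ∂η
      = ∫ z, (φ : Z → ℝ) z * (Qs ψ : Z → ℝ) z ∂η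

/-!
Kadison's inequality `(Q f)² ≤ Q (f²)` makes `Q` and `Q*` contractions of `L²`, so the question is
about a contraction `T` of a Hilbert space, its adjoint `T*` and a unit vector `e` fixed by both.
For `φ ⊥ e` put `vₙ = Tⁿ φ` and `S = (T*)ᵐ Tᵐ`. The norms `‖vₙ‖` decrease to a limit and
`‖S vₙ - vₙ‖² ≤ ‖vₙ‖² - ‖vₙ₊ₘ‖²`, so `⟪vₙ, x - S x⟫ = ⟪vₙ - S vₙ, x⟫ → 0`, while `⟪vₙ, e⟫ = 0`.
As `S` is symmetric and its fixed vectors are multiples of `e`, the span of `e` and the range of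
`1 - S` is dense, and the bound `‖vₙ‖ ≤ ‖φ‖` carries the convergence over to every vector.
-/

local notation "⟪" x ", " y "⟫" => @inner ℝ _ _ x y

section Hilbert

variable {H : Type*} [NormedAddCommGroup H] [InnerProductSpace ℝ H] {T Ts : H →ₗ[ℝ] H}

lemma norm_pow_apply_le (hT : ∀ x, ‖T x‖ ≤ ‖x‖) (n : ℕ) (x : H) : ‖(T ^ n) x‖ ≤ ‖x‖ := by
  induction n generalizing x with
  | zero => simp
  | succ n ih => exact (ih (T x)).trans (hT x)

lemma inner_pow_apply_of_adjoint (hadj : ∀ x y, ⟪T x, y⟫ = ⟪x, Ts y⟫) (n : ℕ) (x y : H) :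
    ⟪(T ^ n) x, y⟫ = ⟪x, (Ts ^ n) y⟫ := by
  induction n generalizing x with
  | zero => simp
  | succ n ih =>
    rw [pow_succ, Module.End.mul_apply, ih, hadj, pow_succ', Module.End.mul_apply]

lemma norm_apply_le_of_adjoint (hadj : ∀ x y, ⟪T x, y⟫ = ⟪x, Ts y⟫)
    (hT : ∀ x, ‖T x‖ ≤ ‖x‖) (y : H) : ‖Ts y‖ ≤ ‖y‖ := by
  have h : ‖Ts y‖ ^ 2 ≤ ‖Ts y‖ * ‖y‖ :=
    calc ‖Ts y‖ ^ 2 = ⟪T (Ts y), y⟫ := by rw [hadj, real_inner_self_eq_norm_sq]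
      _ ≤ ‖T (Ts y)‖ * ‖y‖ := real_inner_le_norm _ _
      _ ≤ ‖Ts y‖ * ‖y‖ := by gcongr; exact hT _
  nlinarith [norm_nonneg (Ts y), norm_nonneg y]

lemma norm_adjoint_apply_apply_sub_sq_le (hadj : ∀ x y, ⟪T x, y⟫ = ⟪x, Ts y⟫)
    (hT : ∀ x, ‖T x‖ ≤ ‖x‖) (x : H) : ‖Ts (T x) - x‖ ^ 2 ≤ ‖x‖ ^ 2 - ‖T x‖ ^ 2 := by
  have hinner : ⟪Ts (T x), x⟫ = ‖T x‖ ^ 2 := by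
    rw [real_inner_comm, ← hadj, real_inner_self_eq_norm_sq]
  have hnorm : ‖Ts (T x)‖ ≤ ‖T x‖ := norm_apply_le_of_adjoint hadj hT _
  rw [norm_sub_sq_real, hinner]
  nlinarith [norm_nonneg (Ts (T x))]

lemma tendsto_norm_adjoint_pow_apply_pow_apply_sub (hadj : ∀ x y, ⟪T x, y⟫ = ⟪x, Ts y⟫)
    (hT : ∀ x, ‖T x‖ ≤ ‖x‖) (m : ℕ) (φ : H) :
    Tendsto (fun n => ‖(Ts ^ m) ((T ^ m) ((T ^ n) φ)) - (T ^ n) φ‖) atTop (𝓝 0) := by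
  have hanti : Antitone fun n => ‖(T ^ n) φ‖ := antitone_nat_of_succ_le fun n => by
    rw [pow_succ', Module.End.mul_apply]; exact hT _
  obtain ⟨L, hL⟩ : ∃ L, Tendsto (fun n => ‖(T ^ n) φ‖) atTop (𝓝 L) :=
    ⟨_, tendsto_atTop_ciInf hanti ⟨0, by rintro _ ⟨n, rfl⟩; exact norm_nonneg _⟩⟩
  have hdrop : Tendsto (fun n => ‖(T ^ n) φ‖ ^ 2 - ‖(T ^ m) ((T ^ n) φ)‖ ^ 2) atTop (𝓝 0) := by
    simp_rw [← Module.End.mul_apply, ← pow_add, add_comm m]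
    simpa using (hL.pow 2).sub ((hL.comp (tendsto_add_atTop_nat m)).pow 2)
  refine squeeze_zero (fun _ => norm_nonneg _) (fun n => ?_) (by simpa using hdrop.sqrt)
  rw [← Real.sqrt_sq (norm_nonneg _)]
  exact Real.sqrt_le_sqrt (norm_adjoint_apply_apply_sub_sq_le
    (inner_pow_apply_of_adjoint hadj m) (norm_pow_apply_le hT m) _)

lemma tendsto_inner_of_topologicalClosure_eq_top {v : ℕ → H} {C : NNReal} (hv : ∀ n, ‖v n‖ ≤ C)
    {D : Submodule ℝ H} (hD : D.topologicalClosure = ⊤)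
    (h : ∀ d ∈ D, Tendsto (fun n => ⟪v n, d⟫) atTop (𝓝 0)) (ψ : H) :
    Tendsto (fun n => ⟪v n, ψ⟫) atTop (𝓝 0) := by
  have hequi : Equicontinuous fun n (x : H) => ⟪v n, x⟫ :=
    (LipschitzWith.uniformEquicontinuous _ C fun n =>
      ((innerSL ℝ (v n)).lipschitz.weaken (by
        rw [← NNReal.coe_le_coe, coe_nnnorm, innerSL_apply_norm]; exact hv n))).equicontinuous
  have hclosed : IsClosed {x | Tendsto (fun n => ⟪v n, x⟫) atTop (𝓝 0)} :=
    hequi.isClosed_setOfPred_tendsto continuous_const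
  have hsub := hclosed.closure_subset_iff.mpr h
  rw [← Submodule.topologicalClosure_coe, hD] at hsub
  exact hsub trivial

lemma topologicalClosure_span_sup_range_id_sub_eq_top [CompleteSpace H] {S : H →ₗ[ℝ] H}
    (hS : S.IsSymmetric) {e : H} (hfix : ∀ x, S x = x → ∃ c : ℝ, x = c • e) :
    ((ℝ ∙ e) ⊔ LinearMap.range (LinearMap.id - S)).topologicalClosure = ⊤ := by
  rw [Submodule.topologicalClosure_eq_top_iff, ← Submodule.inf_orthogonal,
    (LinearMap.IsSymmetric.id.sub hS).orthogonal_range, Submodule.eq_bot_iff]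
  rintro u ⟨hue, hu⟩
  obtain ⟨c, rfl⟩ := hfix u (sub_eq_zero.mp hu).symm
  rw [SetLike.mem_coe, Submodule.mem_orthogonal_singleton_iff_inner_right, inner_smul_right] at hue
  rcases mul_eq_zero.mp hue with rfl | hee
  · exact zero_smul ℝ e
  · rw [inner_self_eq_zero.mp hee, smul_zero]

theorem tendsto_inner_pow_apply_of_inner_eq_zero [CompleteSpace H]
    (hadj : ∀ x y, ⟪T x, y⟫ = ⟪x, Ts y⟫) (hT : ∀ x, ‖T x‖ ≤ ‖x‖) {e : H} (hTse : Ts e = e)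
    (m : ℕ) (hfix : ∀ x, (Ts ^ m) ((T ^ m) x) = x → ∃ c : ℝ, x = c • e)
    {φ : H} (hφ : ⟪φ, e⟫ = 0) (ψ : H) :
    Tendsto (fun n => ⟪(T ^ n) φ, ψ⟫) atTop (𝓝 0) := by
  set S := Ts ^ m * T ^ m
  have hS : S.IsSymmetric := fun x y => by
    simp only [S, Module.End.mul_apply]
    rw [real_inner_comm, ← inner_pow_apply_of_adjoint hadj, real_inner_comm,
      inner_pow_apply_of_adjoint hadj]
  have hdefect : Tendsto (fun n => (T ^ n) φ - S ((T ^ n) φ)) atTop (𝓝 0) :=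
    tendsto_zero_iff_norm_tendsto_zero.mpr <| by
      simpa only [norm_sub_rev, S, Module.End.mul_apply] using
        tendsto_norm_adjoint_pow_apply_pow_apply_sub hadj hT m φ
  refine tendsto_inner_of_topologicalClosure_eq_top (C := ‖φ‖₊) (norm_pow_apply_le hT · φ)
    (topologicalClosure_span_sup_range_id_sub_eq_top hS hfix) (fun d hd => ?_) ψ
  obtain ⟨_, he, _, ⟨x, rfl⟩, rfl⟩ := Submodule.mem_sup.mp hd
  obtain ⟨c, rfl⟩ := Submodule.mem_span_singleton.mp he
  have horth : ∀ n, ⟪(T ^ n) φ, c • e⟫ = 0 := fun n => by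
    rw [inner_smul_right, inner_pow_apply_of_adjoint hadj, Module.End.pow_apply,
      Function.iterate_fixed hTse, hφ, mul_zero]
  have hrange : ∀ n, ⟪(T ^ n) φ, x - S x⟫ = ⟪(T ^ n) φ - S ((T ^ n) φ), x⟫ :=
    fun n => by rw [inner_sub_right, inner_sub_left, hS]
  simpa [inner_add_right, horth, hrange] using hdefect.inner (𝕜 := ℝ) (tendsto_const_nhds (x := x))

theorem tendsto_inner_pow_apply [CompleteSpace H]
    (hadj : ∀ x y, ⟪T x, y⟫ = ⟪x, Ts y⟫) (hT : ∀ x, ‖T x‖ ≤ ‖x‖) {e : H} (he : ‖e‖ = 1)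
    (hTe : T e = e) (hTse : Ts e = e)
    (m : ℕ) (hfix : ∀ x, (Ts ^ m) ((T ^ m) x) = x → ∃ c : ℝ, x = c • e) (φ ψ : H) :
    Tendsto (fun n => ⟪(T ^ n) φ, ψ⟫) atTop (𝓝 (⟪φ, e⟫ * ⟪e, ψ⟫)) := by
  have hφ₀ : ⟪φ - ⟪φ, e⟫ • e, e⟫ = 0 := by
    rw [inner_sub_left, inner_smul_left, real_inner_self_eq_norm_sq, he]; simp
  have hsplit : ∀ n, ⟪(T ^ n) φ, ψ⟫ = ⟪(T ^ n) (φ - ⟪φ, e⟫ • e), ψ⟫ + ⟪φ, e⟫ * ⟪e, ψ⟫ := fun n => by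
    rw [map_sub, map_smul, Module.End.pow_apply T n e, Function.iterate_fixed hTe, inner_sub_left,
      inner_smul_left]
    simp
  simp_rw [hsplit]
  simpa using (tendsto_inner_pow_apply_of_inner_eq_zero hadj hT hTse m hfix hφ₀ ψ).add_const
    (⟪φ, e⟫ * ⟪e, ψ⟫)

end Hilbert

lemma sq_le_of_forall_rat {b c : ℝ} (h : ∀ q : ℚ, 0 ≤ c - 2 * q * b + q ^ 2) : b ^ 2 ≤ c := by
  have hb : 0 ≤ c - 2 * b * b + b ^ 2 :=
    Rat.denseRange_cast.induction_on (p := fun t : ℝ => 0 ≤ c - 2 * t * b + t ^ 2) b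
      (isClosed_le continuous_const (by fun_prop)) h
  linarith

section Markov

variable {Z : Type*} [MeasurableSpace Z] {η : Measure Z}

lemma exists_Lp_one_ae_eq_sq {f : Z → ℝ} (hf : MemLp f 2 η) :
    ∃ g : Lp ℝ 1 η, g =ᵐ[η] fun z => f z ^ 2 :=
  ⟨_, (memLp_one_iff_integrable.mpr hf.integrable_sq).coeFn_toLp⟩

variable [IsFiniteMeasure η] {Q : Lp ℝ 1 η →ₗ[ℝ] Lp ℝ 1 η}

lemma coeFn_oneL1 : (oneL1 η : Z → ℝ) =ᵐ[η] fun _ => 1 := MemLp.coeFn_toLp _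

lemma coeFn_sub_smul_add_smul_oneL1 (g f : Lp ℝ 1 η) (t : ℝ) :
    ⇑(g - (2 * t) • f + t ^ 2 • oneL1 η) =ᵐ[η] fun z => g z - 2 * t * f z + t ^ 2 := by
  filter_upwards [Lp.coeFn_add (g - (2 * t) • f) (t ^ 2 • oneL1 η), Lp.coeFn_sub g ((2 * t) • f),
    Lp.coeFn_smul (2 * t) f, Lp.coeFn_smul (t ^ 2) (oneL1 η), coeFn_oneL1] with z h1 h2 h3 h4 h5
  simp only [h1, Pi.add_apply, h2, Pi.sub_apply, h3, h4, Pi.smul_apply, h5, smul_eq_mul, mul_one]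

lemma IsMarkovOp.sq_apply_le (hQ : IsMarkovOp η Q) {f g : Lp ℝ 1 η}
    (hg : g =ᵐ[η] fun z => f z ^ 2) : ∀ᵐ z ∂η, Q f z ^ 2 ≤ Q g z := by
  have hpos : ∀ t : ℝ, ∀ᵐ z ∂η, 0 ≤ Q g z - 2 * t * Q f z + t ^ 2 := fun t => by
    have hsq : 0 ≤ g - (2 * t) • f + t ^ 2 • oneL1 η := by
      rw [← Lp.coeFn_nonneg]
      filter_upwards [coeFn_sub_smul_add_smul_oneL1 g f t, hg] with z h1 h2
      rw [Pi.zero_apply, h1, h2]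
      nlinarith [sq_nonneg (f z - t)]
    have hQsq := hQ.1 _ hsq
    rw [map_add, map_sub, map_smul, map_smul, hQ.2.1, ← Lp.coeFn_nonneg] at hQsq
    filter_upwards [hQsq, coeFn_sub_smul_add_smul_oneL1 (Q g) (Q f) t] with z h1 h2
    rwa [← h2]
  -- a.e. statements combine only over countably many `t`; continuity in `t` gives the rest
  filter_upwards [ae_all_iff.mpr fun q : ℚ => hpos q] with z hz
  exact sq_le_of_forall_rat hz

lemma IsMarkovOp.integrable_sq (hQ : IsMarkovOp η Q) {f : Lp ℝ 1 η} (hf : MemLp f 2 η) :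
    Integrable (fun z => Q f z ^ 2) η := by
  obtain ⟨g, hg⟩ := exists_Lp_one_ae_eq_sq hf
  refine (L1.integrable_coeFn (Q g)).mono' ((Lp.aestronglyMeasurable (Q f)).pow 2) ?_
  filter_upwards [hQ.sq_apply_le hg] with z hz
  rwa [Real.norm_of_nonneg (sq_nonneg _)]

lemma IsMarkovOp.memLp_two (hQ : IsMarkovOp η Q) (f : Lp ℝ 1 η) (hf : MemLp f 2 η) :
    MemLp (Q f) 2 η :=
  (memLp_two_iff_integrable_sq (Lp.aestronglyMeasurable _)).mpr (hQ.integrable_sq hf)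

lemma IsMarkovOp.integral_sq_le (hQ : IsMarkovOp η Q) {f : Lp ℝ 1 η} (hf : MemLp f 2 η) :
    ∫ z, Q f z ^ 2 ∂η ≤ ∫ z, f z ^ 2 ∂η := by
  obtain ⟨g, hg⟩ := exists_Lp_one_ae_eq_sq hf
  calc ∫ z, Q f z ^ 2 ∂η ≤ ∫ z, Q g z ∂η :=
        integral_mono_ae (hQ.integrable_sq hf) (L1.integrable_coeFn _) (hQ.sq_apply_le hg)
    _ = ∫ z, g z ∂η := hQ.2.2 g
    _ = ∫ z, f z ^ 2 ∂η := integral_congr_ae hg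

end Markov

section L2

variable {Z : Type*} [MeasurableSpace Z] {η : Measure Z} [IsFiniteMeasure η]

def l2ToL1 : Lp ℝ 2 η →ₗ[ℝ] Lp ℝ 1 η where
  toFun g := ((Lp.memLp g).mono_exponent one_le_two).toLp g
  map_add' g g' := by
    rw [← MemLp.toLp_add]
    exact MemLp.toLp_congr _ _ (Lp.coeFn_add g g')
  map_smul' c g := by
    rw [RingHom.id_apply, ← MemLp.toLp_const_smul]
    exact MemLp.toLp_congr _ _ (Lp.coeFn_smul c g)

lemma coeFn_l2ToL1 (g : Lp ℝ 2 η) : l2ToL1 g =ᵐ[η] g :=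
  MemLp.coeFn_toLp ((Lp.memLp g).mono_exponent one_le_two)

lemma l2ToL1_injective : Function.Injective (l2ToL1 (η := η)) := fun g g' h =>
  Lp.ext <| (coeFn_l2ToL1 g).symm.trans (h ▸ coeFn_l2ToL1 g')

lemma memLp_two_l2ToL1 (g : Lp ℝ 2 η) : MemLp (l2ToL1 g) 2 η :=
  (Lp.memLp g).ae_eq (coeFn_l2ToL1 g).symm

lemma mem_range_l2ToL1 {f : Lp ℝ 1 η} : f ∈ LinearMap.range l2ToL1 ↔ MemLp f 2 η :=
  ⟨by rintro ⟨g, rfl⟩; exact memLp_two_l2ToL1 g,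
    fun hf => ⟨hf.toLp f, Lp.ext <| (coeFn_l2ToL1 _).trans hf.coeFn_toLp⟩⟩

lemma inner_eq_integral_l2ToL1 (g h : Lp ℝ 2 η) : ⟪g, h⟫ = ∫ z, l2ToL1 g z * l2ToL1 h z ∂η := by
  rw [L2.inner_def]
  refine integral_congr_ae ?_
  filter_upwards [coeFn_l2ToL1 g, coeFn_l2ToL1 h] with z hg hh
  rw [hg, hh, real_inner_eq_re_inner, RCLike.inner_apply, conj_trivial, mul_comm]; rfl

def restrictL2 (Q : Lp ℝ 1 η →ₗ[ℝ] Lp ℝ 1 η) (hQ2 : ∀ f : Lp ℝ 1 η, MemLp f 2 η → MemLp (Q f) 2 η) :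
    Lp ℝ 2 η →ₗ[ℝ] Lp ℝ 2 η :=
  (LinearEquiv.ofInjective l2ToL1 l2ToL1_injective).symm.toLinearMap ∘ₗ
    (Q ∘ₗ l2ToL1).codRestrict _ fun g => mem_range_l2ToL1.mpr (hQ2 _ (memLp_two_l2ToL1 g))

variable {Q : Lp ℝ 1 η →ₗ[ℝ] Lp ℝ 1 η} {hQ2 : ∀ f : Lp ℝ 1 η, MemLp f 2 η → MemLp (Q f) 2 η}

lemma l2ToL1_restrictL2 (g : Lp ℝ 2 η) : l2ToL1 (restrictL2 Q hQ2 g) = Q (l2ToL1 g) :=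
  LinearEquiv.ofInjective_symm_apply l2ToL1 (h := l2ToL1_injective) _

lemma l2ToL1_restrictL2_pow (n : ℕ) (g : Lp ℝ 2 η) :
    l2ToL1 ((restrictL2 Q hQ2 ^ n) g) = (Q ^ n) (l2ToL1 g) := by
  induction n generalizing g with
  | zero => rfl
  | succ n ih => rw [pow_succ, Module.End.mul_apply, ih, l2ToL1_restrictL2, pow_succ]; rfl

lemma IsMarkovOp.norm_restrictL2_le (hQ : IsMarkovOp η Q) (g : Lp ℝ 2 η) :
    ‖restrictL2 Q hQ2 g‖ ≤ ‖g‖ := by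
  rw [← pow_le_pow_iff_left₀ (norm_nonneg _) (norm_nonneg _) two_ne_zero,
    ← real_inner_self_eq_norm_sq, ← real_inner_self_eq_norm_sq, inner_eq_integral_l2ToL1,
    inner_eq_integral_l2ToL1, l2ToL1_restrictL2]
  simpa only [sq] using hQ.integral_sq_le (memLp_two_l2ToL1 g)

lemma MarkovAdjoint.inner_restrictL2 {Qs : Lp ℝ 1 η →ₗ[ℝ] Lp ℝ 1 η}
    {hQs2 : ∀ f : Lp ℝ 1 η, MemLp f 2 η → MemLp (Qs f) 2 η} (hadj : MarkovAdjoint η Q Qs)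
    (g h : Lp ℝ 2 η) : ⟪restrictL2 Q hQ2 g, h⟫ = ⟪g, restrictL2 Qs hQs2 h⟫ := by
  rw [inner_eq_integral_l2ToL1, inner_eq_integral_l2ToL1, l2ToL1_restrictL2, l2ToL1_restrictL2]
  exact hadj _ _ (memLp_two_l2ToL1 g) (memLp_two_l2ToL1 h)

variable (η) in
def oneL2 : Lp ℝ 2 η := (memLp_const 1).toLp fun _ => (1 : ℝ)

lemma l2ToL1_oneL2 : l2ToL1 (oneL2 η) = oneL1 η :=
  Lp.ext <| (coeFn_l2ToL1 _).trans ((MemLp.coeFn_toLp _).trans coeFn_oneL1.symm)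

lemma restrictL2_oneL2 (h1 : Q (oneL1 η) = oneL1 η) : restrictL2 Q hQ2 (oneL2 η) = oneL2 η :=
  l2ToL1_injective <| by rw [l2ToL1_restrictL2, l2ToL1_oneL2, h1]

lemma inner_oneL2 (g : Lp ℝ 2 η) : ⟪g, oneL2 η⟫ = ∫ z, l2ToL1 g z ∂η := by
  rw [inner_eq_integral_l2ToL1, l2ToL1_oneL2]
  refine integral_congr_ae ?_
  filter_upwards [coeFn_oneL1] with z hz
  rw [hz, mul_one]

lemma norm_oneL2 [IsProbabilityMeasure η] : ‖oneL2 η‖ = 1 := by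
  have h : ‖oneL2 η‖ ^ 2 = 1 := by
    rw [← real_inner_self_eq_norm_sq, inner_oneL2, l2ToL1_oneL2,
      integral_congr_ae coeFn_oneL1, integral_const, probReal_univ, smul_eq_mul, mul_one]
  exact (pow_eq_one_iff_of_nonneg (norm_nonneg _) two_ne_zero).mp h

end L2

theorem statement2_general
    {Z : Type*} [MeasurableSpace Z]
    (η : Measure Z) [IsProbabilityMeasure η]
    (Q Qs : Lp ℝ 1 η →ₗ[ℝ] Lp ℝ 1 η)
    (hQ : IsMarkovOp η Q) (hQs : IsMarkovOp η Qs) (hadj : MarkovAdjoint η Q Qs)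
    (hfix : ∃ m : ℕ, 1 ≤ m ∧ ∀ ψ : Lp ℝ 1 η, MemLp (ψ : Z → ℝ) 2 η →
      (Qs ^ m) ((Q ^ m) ψ) = ψ → ∃ c : ℝ, ψ = c • oneL1 η) :
    ∀ φ ψ : Lp ℝ 1 η, MemLp (φ : Z → ℝ) 2 η → MemLp (ψ : Z → ℝ) 2 η →
      Tendsto (fun n : ℕ => ∫ z, ((Q ^ n) φ : Z → ℝ) z * (ψ : Z → ℝ) z ∂η) atTop
        (𝓝 ((∫ z, (φ : Z → ℝ) z ∂η) * ∫ z, (ψ : Z → ℝ) z ∂η)) := by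
  obtain ⟨m, -, hfix⟩ := hfix
  have hfixL2 (x : Lp ℝ 2 η)
      (hx : (restrictL2 Qs hQs.memLp_two ^ m) ((restrictL2 Q hQ.memLp_two ^ m) x) = x) :
      ∃ c : ℝ, x = c • oneL2 η := by
    have hx1 := congrArg l2ToL1 hx
    rw [l2ToL1_restrictL2_pow, l2ToL1_restrictL2_pow] at hx1
    obtain ⟨c, hc⟩ := hfix _ (memLp_two_l2ToL1 x) hx1
    exact ⟨c, l2ToL1_injective (by rw [hc, map_smul, l2ToL1_oneL2])⟩
  intro φ ψ hφ hψ
  obtain ⟨φ, rfl⟩ := mem_range_l2ToL1.mpr hφ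
  obtain ⟨ψ, rfl⟩ := mem_range_l2ToL1.mpr hψ
  have hmix := tendsto_inner_pow_apply hadj.inner_restrictL2 hQ.norm_restrictL2_le norm_oneL2
    (restrictL2_oneL2 hQ.2.1) (restrictL2_oneL2 hQs.2.1) m hfixL2 φ ψ
  rw [real_inner_comm ψ (oneL2 η), inner_oneL2, inner_oneL2] at hmix
  simpa only [inner_eq_integral_l2ToL1, l2ToL1_restrictL2_pow] using hmix

/-- If `Q` is a measure-preserving Markov operator on `L¹(Z,η)` of a Lebesgue
probability space such that for some `m ≥ 1` every `ψ ∈ L²` with `(Q*)^m Q^m ψ = ψ` is a.e.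
constant, then `Q` is mixing. -/
theorem statement2
    {Z : Type*} [MeasurableSpace Z] [StandardBorelSpace Z]
    (η : Measure Z) [IsProbabilityMeasure η]
    (Q Qs : Lp ℝ 1 η →ₗ[ℝ] Lp ℝ 1 η)
    (hQ : IsMarkovOp η Q) (hQs : IsMarkovOp η Qs) (hadj : MarkovAdjoint η Q Qs)
    (hfix : ∃ m : ℕ, 1 ≤ m ∧ ∀ ψ : Lp ℝ 1 η, MemLp (ψ : Z → ℝ) 2 η →
      (Qs ^ m) ((Q ^ m) ψ) = ψ → ∃ c : ℝ, ψ = c • oneL1 η) :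
    ∀ φ ψ : Lp ℝ 1 η, MemLp (φ : Z → ℝ) 2 η → MemLp (ψ : Z → ℝ) 2 η →
      Tendsto (fun n : ℕ => ∫ z, ((Q ^ n) φ : Z → ℝ) z * (ψ : Z → ℝ) z ∂η) atTop
        (𝓝 ((∫ z, (φ : Z → ℝ) z ∂η) * ∫ z, (ψ : Z → ℝ) z ∂η)) :=
  statement2_general η Q Qs hQ hQs hadj hfix
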